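/- Let d ≥ 1, r > 0 and γ ∈ (0,1]. Let φ : ℝ^d → ℝ be bounded and measurable and let g : ℝ^d → ℝ be measurable with γ ≤ g(x) ≤ 1 for all x. Then for every x ∈ ℝ^d, 2 φ(x) 𝓛_r φ(x) − 2 φ(x) ⟨⟨φ·g⟩⟩(x,r) ≤ 𝓛_r(φ²)(x) − 2 (γ − r²/(d+2)) φ(x)². -/

import Mathlib

open MeasureTheory Metric

/-- The average of `φ` over the ball of centre `x` and radius `r`. -/
noncomputable def ballAvg (d : ℕ) (φ : EuclideanSpace ℝ (Fin d) → ℝ)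
    (x : EuclideanSpace ℝ (Fin d)) (r : ℝ) : ℝ :=
  (volume (ball (0 : EuclideanSpace ℝ (Fin d)) r)).toReal⁻¹ * ∫ y in ball x r, φ y

/-- The double ball average `⟨⟨φ⟩⟩(x,r)`. -/
noncomputable def dblAvg (d : ℕ) (φ : EuclideanSpace ℝ (Fin d) → ℝ)
    (x : EuclideanSpace ℝ (Fin d)) (r : ℝ) : ℝ :=
  ballAvg d (fun y => ballAvg d φ y r) x r

/-- The operator `𝓛_r φ(x) = ((d+2)/(2r²)) (⟨⟨φ⟩⟩(x,r) − φ(x))`. -/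
noncomputable def opL (d : ℕ) (r : ℝ) (φ : EuclideanSpace ℝ (Fin d) → ℝ)
    (x : EuclideanSpace ℝ (Fin d)) : ℝ :=
  ((d : ℝ) + 2) / (2 * r ^ 2) * (dblAvg d φ x r - φ x)

/-! Put `c = (d+2)/(2r²)` and `a = φ(x)`, so that `r²/(d+2) = 1/(2c)`. Since `⟨⟨·⟩⟩(x,r)` is linear
on bounded measurable functions and fixes constants, the claim is `⟨⟨F⟩⟩(x,r) ≥ 0` for
`F = c(φ - a)² + 2aφg + a²/c - 2γa²`. This holds because `⟨⟨·⟩⟩` preserves nonnegativity and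
`c F = (c(φ - a) + a g)² + a²(1 - g²) + 2ca²(g - γ) ≥ 0`. -/

open scoped ENNReal

theorem MeasureTheory.MemLp.integrableOn_of_measure_ne_top {α E : Type*} [MeasurableSpace α]
    [NormedAddCommGroup E] {μ : Measure α} {f : α → E} {s : Set α} (hf : MemLp f ∞ μ)
    (hs : μ s ≠ ∞) : IntegrableOn f s μ :=
  Measure.integrableOn_of_bounded hs hf.1 (ae_restrict_of_ae (ae_le_lpNorm_exponent_top hf))

theorem two_mul_mul_sq_le_of_abs_le_one {a b c h γ : ℝ} (hc : 0 < c) (hγh : γ ≤ h)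
    (hh : |h| ≤ 1) : 2 * γ * a ^ 2 ≤ c * (b - a) ^ 2 + 2 * a * (b * h) + a ^ 2 / c := by
  have hsq : c * (c * (b - a) ^ 2 + 2 * a * (b * h) + a ^ 2 / c - 2 * γ * a ^ 2) =
      (c * (b - a) + a * h) ^ 2 + a ^ 2 * (1 - h ^ 2) + 2 * c * a ^ 2 * (h - γ) := by
    field_simp
    ring
  have hnonneg : 0 ≤ c * (c * (b - a) ^ 2 + 2 * a * (b * h) + a ^ 2 / c - 2 * γ * a ^ 2) := by
    have := sub_nonneg.2 ((sq_le_one_iff_abs_le_one h).2 hh)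
    have := sub_nonneg.2 hγh
    rw [hsq]
    positivity
  exact sub_nonneg.1 ((mul_nonneg_iff_of_pos_left hc).1 hnonneg)

section BallAverages

variable {d : ℕ} {r : ℝ} {f g : EuclideanSpace ℝ (Fin d) → ℝ} {x : EuclideanSpace ℝ (Fin d)}

theorem ballAvg_add (hf : IntegrableOn f (ball x r)) (hg : IntegrableOn g (ball x r)) :
    ballAvg d (fun z => f z + g z) x r = ballAvg d f x r + ballAvg d g x r := by
  simp only [ballAvg, integral_add hf hg, mul_add]

theorem ballAvg_const_mul (c : ℝ) :
    ballAvg d (fun z => c * f z) x r = c * ballAvg d f x r := by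
  simp only [ballAvg, integral_const_mul]
  ring

theorem ballAvg_const (hr : 0 < r) (c : ℝ) : ballAvg d (fun _ => c) x r = c := by
  have hV : volume.real (ball x r) ≠ 0 :=
    (ENNReal.toReal_pos (measure_ball_pos volume x hr).ne' measure_ball_lt_top.ne).ne'
  rw [ballAvg, setIntegral_const, smul_eq_mul, ← Measure.addHaar_ball_center volume x r,
    ← measureReal_def, inv_mul_cancel_left₀ hV]

theorem ballAvg_nonneg (hf : ∀ z, 0 ≤ f z) : 0 ≤ ballAvg d f x r :=
  mul_nonneg (inv_nonneg.2 ENNReal.toReal_nonneg)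
    (setIntegral_nonneg measurableSet_ball fun z _ => hf z)

theorem norm_ballAvg_le {C : ℝ} (hC : 0 ≤ C) (hf : ∀ᵐ z, ‖f z‖ ≤ C) :
    ‖ballAvg d f x r‖ ≤ C := by
  have hint : ‖∫ z in ball x r, f z‖ ≤ C * volume.real (ball x r) :=
    norm_setIntegral_le_of_norm_le_const_ae measure_ball_lt_top (ae_restrict_of_ae hf)
  rw [measureReal_def, Measure.addHaar_ball_center] at hint
  set V := (volume (ball (0 : EuclideanSpace ℝ (Fin d)) r)).toReal
  rw [ballAvg, norm_mul, norm_inv, Real.norm_of_nonneg ENNReal.toReal_nonneg]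
  calc V⁻¹ * ‖∫ z in ball x r, f z‖ ≤ V⁻¹ * (C * V) :=
        mul_le_mul_of_nonneg_left hint (inv_nonneg.2 ENNReal.toReal_nonneg)
    _ ≤ C := by
        rw [mul_left_comm]
        exact mul_le_of_le_one_right hC (inv_mul_le_one_of_le₀ le_rfl ENNReal.toReal_nonneg)

theorem aestronglyMeasurable_ballAvg (hf : AEStronglyMeasurable f) :
    AEStronglyMeasurable (fun y => ballAvg d f y r) := by
  have hS : MeasurableSet {p : EuclideanSpace ℝ (Fin d) × EuclideanSpace ℝ (Fin d) |
      dist p.2 p.1 < r} :=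
    (isOpen_lt (continuous_snd.dist continuous_fst) continuous_const).measurableSet
  have hF := ((hf.comp_snd (μ := volume)).indicator hS).integral_prod_right'
  refine (hF.const_mul (volume (ball (0 : EuclideanSpace ℝ (Fin d)) r)).toReal⁻¹).congr
    (ae_of_all _ fun y => ?_)
  simp only [ballAvg]
  rw [← integral_indicator measurableSet_ball]
  rfl

theorem MeasureTheory.MemLp.ballAvg (hf : MemLp f ∞) : MemLp (fun y => ballAvg d f y r) ∞ :=
  memLp_top_of_bound (aestronglyMeasurable_ballAvg hf.1) _
    (ae_of_all _ fun _ => norm_ballAvg_le lpNorm_nonneg (ae_le_lpNorm_exponent_top hf))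

end BallAverages

section DoubleBallAverages

variable {d : ℕ} {r : ℝ} {f g : EuclideanSpace ℝ (Fin d) → ℝ} {x : EuclideanSpace ℝ (Fin d)}

theorem dblAvg_add (hf : MemLp f ∞) (hg : MemLp g ∞) :
    dblAvg d (fun z => f z + g z) x r = dblAvg d f x r + dblAvg d g x r := by
  have hball : ∀ {h : EuclideanSpace ℝ (Fin d) → ℝ}, MemLp h ∞ → ∀ y,
      IntegrableOn h (ball y r) := fun hh _ =>
    hh.integrableOn_of_measure_ne_top measure_ball_lt_top.ne
  simp only [dblAvg, ballAvg_add (hball hf _) (hball hg _)]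
  exact ballAvg_add (hball hf.ballAvg x) (hball hg.ballAvg x)

theorem dblAvg_const_mul (c : ℝ) : dblAvg d (fun z => c * f z) x r = c * dblAvg d f x r := by
  simp only [dblAvg, ballAvg_const_mul]

theorem dblAvg_const (hr : 0 < r) (c : ℝ) : dblAvg d (fun _ => c) x r = c := by
  simp only [dblAvg, ballAvg_const hr]

theorem dblAvg_nonneg (hf : ∀ z, 0 ≤ f z) : 0 ≤ dblAvg d f x r :=
  ballAvg_nonneg fun _ => ballAvg_nonneg hf

end DoubleBallAverages

theorem square_dissipativity_general (d : ℕ) (r : ℝ) (hr : 0 < r)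
    (γ : ℝ) (hγ : γ ∈ Set.Ioc (0 : ℝ) 1)
    (φ : EuclideanSpace ℝ (Fin d) → ℝ) (hφm : Measurable φ)
    (hφb : ∃ M : ℝ, ∀ x, |φ x| ≤ M)
    (g : EuclideanSpace ℝ (Fin d) → ℝ) (hgm : Measurable g)
    (hg : ∀ x, γ ≤ g x ∧ g x ≤ 1)
    (x : EuclideanSpace ℝ (Fin d)) :
    2 * φ x * opL d r φ x - 2 * φ x * dblAvg d (fun y => φ y * g y) x r ≤
      opL d r (fun y => φ y ^ 2) x - 2 * (γ - r ^ 2 / ((d : ℝ) + 2)) * φ x ^ 2 := by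
  obtain ⟨M, hM⟩ := hφb
  have hg_abs (z) : |g z| ≤ 1 := abs_le.2 ⟨by linarith [hγ.1, (hg z).1], (hg z).2⟩
  have hφ : MemLp φ ∞ := memLp_top_of_bound hφm.aestronglyMeasurable M (ae_of_all _ hM)
  have hφ2 : MemLp (fun z => φ z ^ 2) ∞ := by simpa only [sq] using hφ.mul' hφ
  have hφg : MemLp (fun z => φ z * g z) ∞ :=
    (memLp_top_of_bound hgm.aestronglyMeasurable 1 (ae_of_all _ hg_abs)).mul' hφ
  set c := ((d : ℝ) + 2) / (2 * r ^ 2) with hc_def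
  have hc : 0 < c := by positivity
  set a := φ x
  have hpointwise (z) : 0 ≤ c * φ z ^ 2 + (-2 * c * a) * φ z + 2 * a * (φ z * g z) +
      (c * a ^ 2 + a ^ 2 / c - 2 * γ * a ^ 2) := by
    linear_combination two_mul_mul_sq_le_of_abs_le_one (a := a) (b := φ z) hc (hg z).1 (hg_abs z)
  have hmean := dblAvg_nonneg (r := r) (x := x) hpointwise
  rw [dblAvg_add ?terms₃ (memLp_top_const _), dblAvg_add ?terms₂ (hφg.const_mul _),
    dblAvg_add (hφ2.const_mul _) (hφ.const_mul _), dblAvg_const_mul, dblAvg_const_mul,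
    dblAvg_const_mul, dblAvg_const hr] at hmean
  case terms₂ => exact (hφ2.const_mul _).add (hφ.const_mul _)
  case terms₃ => exact ((hφ2.const_mul _).add (hφ.const_mul _)).add (hφg.const_mul _)
  have hinv : r ^ 2 / ((d : ℝ) + 2) = c⁻¹ / 2 := by
    rw [hc_def]
    field_simp
  rw [opL, opL, ← hc_def, hinv]
  linear_combination hmean

theorem square_dissipativity (d : ℕ) (hd : 1 ≤ d) (r : ℝ) (hr : 0 < r)
    (γ : ℝ) (hγ : γ ∈ Set.Ioc (0 : ℝ) 1)
    (φ : EuclideanSpace ℝ (Fin d) → ℝ) (hφm : Measurable φ)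
    (hφb : ∃ M : ℝ, ∀ x, |φ x| ≤ M)
    (g : EuclideanSpace ℝ (Fin d) → ℝ) (hgm : Measurable g)
    (hg : ∀ x, γ ≤ g x ∧ g x ≤ 1)
    (x : EuclideanSpace ℝ (Fin d)) :
    2 * φ x * opL d r φ x - 2 * φ x * dblAvg d (fun y => φ y * g y) x r ≤
      opL d r (fun y => φ y ^ 2) x - 2 * (γ - r ^ 2 / ((d : ℝ) + 2)) * φ x ^ 2 :=
  square_dissipativity_general d r hr γ hγ φ hφm hφb g hgm hg x
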